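/- arXiv:2512.18872 — 11 statements merged into one kernel-verified Lean document; each statement's English description precedes it below -/
import Mathlib

section
/- Let n ≥ 3 be an integer, β = 2π/n, and let A_j = exp(iβj) ∈ ℂ (j ∈ ℤ, indices modulo n) be the vertices of the regular n-gon inscribed in the unit circle. Let k be an integer with 1 ≤ k < n/2 and define φ_k : ℂ → ℂ by φ_k(z) = (cos(kβ/2)/cos(β/2))·exp(i(k−1)β/2)·z. Then for every integer j the point φ_k(A_j) lies on the line through A_{j−1} and A_{j−1+k} and also on the line through A_j and A_{j+k}; that is, φ_k maps each vertex A_j of the polygon to the intersection point T_j of the two consecutive k-th diagonals A_{j−1}A_{j−1+k} and A_jA_{j+k}. -/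
open Real

/-!
With `b = kβ/2`, both diagonals through `φ (A j)` are chords from `e^{iθ}` to `e^{i(θ + 2b)}`, and
`φ (A j) = (cos b / cos a) e^{i(b - a + θ)}` with `a = -β/2`, `θ = β(j - 1)` for the first and
`a = β/2`, `θ = βj` for the second. Rotating by `e^{-iθ}` leaves the identity
`(cos b / cos a) e^{i(b - a)} = 1 + t (e^{2ib} - 1)` with `t = (1 - tan a / tan b) / 2`, which is
checked on real and imaginary parts. The hypotheses `1 ≤ k < n/2` make `cos (β/2)` and
`sin (kβ/2)` nonzero.
-/

lemma exists_eq_one_add_mul_exp_sub_one (a b : ℝ) (ha : cos a ≠ 0) (hb : sin b ≠ 0) :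
    ∃ t : ℝ, ((cos b / cos a : ℝ) : ℂ) * Complex.exp ((b - a : ℝ) * Complex.I)
      = 1 + t * (Complex.exp ((2 * b : ℝ) * Complex.I) - 1) := by
  set t := (1 - cos b * sin a / (sin b * cos a)) / 2
  refine ⟨t, ?_⟩
  have hre : cos b / cos a * cos (b - a) = 1 + t * (cos (2 * b) - 1) := by
    rw [cos_sub, cos_two_mul]
    simp only [t]
    field_simp
    linear_combination (2 * cos b * sin a) * sin_sq_add_cos_sq b
  have him : cos b / cos a * sin (b - a) = t * sin (2 * b) := by
    rw [sin_sub, sin_two_mul]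
    simp only [t]
    field_simp
  apply Complex.ext <;>
    simp only [Complex.mul_re, Complex.mul_im, Complex.add_re, Complex.add_im, Complex.sub_re,
      Complex.sub_im, Complex.one_re, Complex.one_im, Complex.ofReal_re, Complex.ofReal_im,
      Complex.exp_ofReal_mul_I_re, Complex.exp_ofReal_mul_I_im]
  · linarith
  · linarith

lemma exists_eq_exp_add_smul_exp_sub_exp (a b θ : ℝ) (ha : cos a ≠ 0) (hb : sin b ≠ 0) :
    ∃ t : ℝ, ((cos b / cos a : ℝ) : ℂ) * Complex.exp ((b - a + θ : ℝ) * Complex.I)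
      = Complex.exp (θ * Complex.I)
        + t • (Complex.exp ((θ + 2 * b : ℝ) * Complex.I) - Complex.exp (θ * Complex.I)) := by
  obtain ⟨t, ht⟩ := exists_eq_one_add_mul_exp_sub_one a b ha hb
  refine ⟨t, ?_⟩
  have h₁ : Complex.exp ((b - a + θ : ℝ) * Complex.I)
      = Complex.exp ((b - a : ℝ) * Complex.I) * Complex.exp (θ * Complex.I) := by
    rw [← Complex.exp_add]; push_cast; ring_nf
  have h₂ : Complex.exp ((θ + 2 * b : ℝ) * Complex.I)
      = Complex.exp ((2 * b : ℝ) * Complex.I) * Complex.exp (θ * Complex.I) := by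
    rw [← Complex.exp_add]; push_cast; ring_nf
  rw [h₁, h₂, Complex.real_smul]
  linear_combination Complex.exp (θ * Complex.I) * ht

lemma cos_pi_div_pos {n : ℝ} (hn : 2 < n) : 0 < cos (π / n) := by
  apply cos_pos_of_mem_Ioo
  constructor
  · have := pi_pos; have : 0 < π / n := by positivity
    linarith
  · rw [div_lt_div_iff₀ (by linarith) two_pos]
    nlinarith [pi_pos]

lemma sin_mul_pi_div_pos {k n : ℝ} (hk : 0 < k) (hkn : k < n) : 0 < sin (k * π / n) := by
  apply sin_pos_of_pos_of_lt_pi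
  · have := pi_pos; have : 0 < n := by linarith
    positivity
  · rw [div_lt_iff₀ (by linarith)]
    nlinarith [pi_pos]

theorem stmt_0_general (n : ℤ) (β : ℝ) (hβ : β = 2 * π / n)
    (A : ℤ → ℂ) (hA : ∀ j : ℤ, A j = Complex.exp ((β * j : ℝ) * Complex.I))
    (k : ℤ) (hk1 : 1 ≤ k) (hk2 : (k : ℝ) < n / 2)
    (φ : ℂ → ℂ)
    (hφ : ∀ z : ℂ, φ z = (Real.cos (k * β / 2) / Real.cos (β / 2) : ℝ) *
      Complex.exp (((k - 1) * β / 2 : ℝ) * Complex.I) * z) :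
    ∀ j : ℤ,
      (∃ t : ℝ, φ (A j) = A (j - 1) + t • (A (j - 1 + k) - A (j - 1))) ∧
      (∃ t : ℝ, φ (A j) = A j + t • (A (j + k) - A j)) := by
  have hk : (1 : ℝ) ≤ k := by exact_mod_cast hk1
  have hcos : cos (β / 2) ≠ 0 := by
    rw [show β / 2 = π / n by rw [hβ]; ring]
    exact (cos_pi_div_pos (by linarith)).ne'
  have hsin : sin (k * β / 2) ≠ 0 := by
    rw [show k * β / 2 = k * π / n by rw [hβ]; ring]
    exact (sin_mul_pi_div_pos (by linarith) (by linarith)).ne'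
  intro j
  have hφA : φ (A j) = ((cos (k * β / 2) / cos (β / 2) : ℝ) : ℂ)
      * Complex.exp (((k - 1) * β / 2 + β * j : ℝ) * Complex.I) := by
    rw [hφ, hA, mul_assoc, ← Complex.exp_add]; push_cast; ring_nf
  constructor
  · obtain ⟨t, ht⟩ := exists_eq_exp_add_smul_exp_sub_exp (-(β / 2)) (k * β / 2) (β * (j - 1))
      (by rwa [cos_neg]) hsin
    rw [cos_neg] at ht
    refine ⟨t, ?_⟩
    rw [hφA, hA, hA]
    convert ht using 5 <;> push_cast <;> ring
  · obtain ⟨t, ht⟩ := exists_eq_exp_add_smul_exp_sub_exp (β / 2) (k * β / 2) (β * j) hcos hsin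
    refine ⟨t, ?_⟩
    rw [hφA, hA, hA]
    convert ht using 5 <;> push_cast <;> ring

/-- For a regular `n`-gon with vertices `A j = exp(iβj)`, `β = 2π/n`,
and `1 ≤ k < n/2`, the rotational similarity
`φ_k(z) = (cos(kβ/2)/cos(β/2))·exp(i(k−1)β/2)·z` maps each vertex `A j` to a point
lying on the line through `A (j−1)` and `A (j−1+k)` and on the line through
`A j` and `A (j+k)`, i.e. to the intersection of two consecutive `k`-th diagonals. -/
theorem stmt_0 (n : ℤ) (hn : 3 ≤ n) (β : ℝ) (hβ : β = 2 * π / n)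
    (A : ℤ → ℂ) (hA : ∀ j : ℤ, A j = Complex.exp ((β * j : ℝ) * Complex.I))
    (k : ℤ) (hk1 : 1 ≤ k) (hk2 : (k : ℝ) < n / 2)
    (φ : ℂ → ℂ)
    (hφ : ∀ z : ℂ, φ z = (Real.cos (k * β / 2) / Real.cos (β / 2) : ℝ) *
      Complex.exp (((k - 1) * β / 2 : ℝ) * Complex.I) * z) :
    ∀ j : ℤ,
      (∃ t : ℝ, φ (A j) = A (j - 1) + t • (A (j - 1 + k) - A (j - 1))) ∧
      (∃ t : ℝ, φ (A j) = A j + t • (A (j + k) - A j)) :=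
  stmt_0_general n β hβ A hA k hk1 hk2 φ hφ
end

section
/- (Kárteszi's Theorem.) Let n ≥ 3 be an integer, β = 2π/n, and let A_j = exp(iβj) ∈ ℂ (indices modulo n) be the vertices of the regular n-gon 𝒜_1 inscribed in the unit circle. For 1 ≤ k < n/2 define φ_k(z) = (cos(kβ/2)/cos(β/2))·exp(i(k−1)β/2)·z, so that B_j := φ_m(A_j) are the vertices of the m-th inner n-gon 𝒜_m and D_j := φ_ℓ(A_j) are the vertices of the ℓ-th inner n-gon 𝒜_ℓ. Then for all integers ℓ, m with 1 ≤ ℓ, m < n/2 and every integer j, the four points φ_m(A_j), φ_m(A_{j+ℓ}), φ_ℓ(A_j), φ_ℓ(A_{j+m}) are collinear over ℝ; that is, the ℓ-th diagonal B_jB_{j+ℓ} of 𝒜_m and the m-th diagonal D_jD_{j+m} of 𝒜_ℓ lie on a common line. -/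
open Real

private lemma key (r t R θ a b : ℝ) (h1 : R = r * Real.cos (a + b - θ))
    (h2 : t = r * Real.sin (a + b - θ)) :
    (r : ℂ) * Complex.exp ((a : ℝ) * Complex.I) * Complex.exp ((b : ℝ) * Complex.I)
      = t • (Complex.I * Complex.exp ((θ : ℝ) * Complex.I))
        + (R : ℂ) * Complex.exp ((θ : ℝ) * Complex.I) := by
  subst h1 h2
  rw [mul_assoc, ← Complex.exp_add, Complex.real_smul]
  rw [show ((a:ℂ)) * Complex.I + (b:ℂ) * Complex.I
      = ((a + b - θ : ℝ)) * Complex.I + (θ : ℝ) * Complex.I by push_cast; ring]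
  rw [Complex.exp_add, Complex.exp_mul_I, ← Complex.ofReal_cos, ← Complex.ofReal_sin]
  push_cast
  ring_nf

/-- Kárteszi's Theorem: with `B j = φ_m (A j)` the vertices of the `m`-th
inner `n`-gon and `D j = φ_ℓ (A j)` those of the `ℓ`-th inner `n`-gon, for every `j`
the four points `φ_m(A j), φ_m(A (j+ℓ)), φ_ℓ(A j), φ_ℓ(A (j+m))` are collinear over ℝ. -/
theorem stmt_2 (n : ℤ) (hn : 3 ≤ n) (β : ℝ) (hβ : β = 2 * π / n)
    (A : ℤ → ℂ) (hA : ∀ j : ℤ, A j = Complex.exp ((β * j : ℝ) * Complex.I))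
    (ℓ m : ℤ) (hℓ1 : 1 ≤ ℓ) (hℓ2 : (ℓ : ℝ) < n / 2) (hm1 : 1 ≤ m) (hm2 : (m : ℝ) < n / 2)
    (φℓ φm : ℂ → ℂ)
    (hφℓ : ∀ z : ℂ, φℓ z = (Real.cos (ℓ * β / 2) / Real.cos (β / 2) : ℝ) *
      Complex.exp (((ℓ - 1) * β / 2 : ℝ) * Complex.I) * z)
    (hφm : ∀ z : ℂ, φm z = (Real.cos (m * β / 2) / Real.cos (β / 2) : ℝ) *
      Complex.exp (((m - 1) * β / 2 : ℝ) * Complex.I) * z) :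
    ∀ j : ℤ,
      Collinear ℝ ({φm (A j), φm (A (j + ℓ)), φℓ (A j), φℓ (A (j + m))} : Set ℂ) := by
  intro j
  rw [collinear_iff_exists_forall_eq_smul_vadd]
  set θ : ℝ := ((m : ℝ) - 1) * β / 2 + β * (j : ℝ) + (ℓ : ℝ) * β / 2 with hθ
  refine ⟨((Real.cos (m * β / 2) / Real.cos (β / 2) * Real.cos (ℓ * β / 2) : ℝ) : ℂ)
      * Complex.exp ((θ : ℝ) * Complex.I),
    Complex.I * Complex.exp ((θ : ℝ) * Complex.I), ?_⟩
  rintro p (rfl | rfl | rfl | rfl)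
  · refine ⟨-(Real.cos (m * β / 2) / Real.cos (β / 2) * Real.sin (ℓ * β / 2)), ?_⟩
    rw [hφm, hA, vadd_eq_add]
    refine key _ _ _ _ _ _ ?_ ?_
    · rw [show ((m:ℝ) - 1) * β / 2 + β * (j:ℝ) - θ = -((ℓ:ℝ) * β / 2) by rw [hθ]; ring,
        Real.cos_neg]
    · rw [show ((m:ℝ) - 1) * β / 2 + β * (j:ℝ) - θ = -((ℓ:ℝ) * β / 2) by rw [hθ]; ring,
        Real.sin_neg]
      ring
  · refine ⟨Real.cos (m * β / 2) / Real.cos (β / 2) * Real.sin (ℓ * β / 2), ?_⟩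
    rw [hφm, hA, vadd_eq_add]
    refine key _ _ _ _ _ _ ?_ ?_
    all_goals push_cast
    · rw [show ((m:ℝ) - 1) * β / 2 + β * ((j:ℝ) + (ℓ:ℝ)) - θ = (ℓ:ℝ) * β / 2 by rw [hθ]; ring]
    · rw [show ((m:ℝ) - 1) * β / 2 + β * ((j:ℝ) + (ℓ:ℝ)) - θ = (ℓ:ℝ) * β / 2 by rw [hθ]; ring]
  · refine ⟨-(Real.cos (ℓ * β / 2) / Real.cos (β / 2) * Real.sin (m * β / 2)), ?_⟩
    rw [hφℓ, hA, vadd_eq_add]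
    refine key _ _ _ _ _ _ ?_ ?_
    · rw [show ((ℓ:ℝ) - 1) * β / 2 + β * (j:ℝ) - θ = -((m:ℝ) * β / 2) by rw [hθ]; ring,
        Real.cos_neg]
      ring
    · rw [show ((ℓ:ℝ) - 1) * β / 2 + β * (j:ℝ) - θ = -((m:ℝ) * β / 2) by rw [hθ]; ring,
        Real.sin_neg]
      ring
  · refine ⟨Real.cos (ℓ * β / 2) / Real.cos (β / 2) * Real.sin (m * β / 2), ?_⟩
    rw [hφℓ, hA, vadd_eq_add]
    refine key _ _ _ _ _ _ ?_ ?_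
    all_goals push_cast
    · rw [show ((ℓ:ℝ) - 1) * β / 2 + β * ((j:ℝ) + (m:ℝ)) - θ = (m:ℝ) * β / 2 by rw [hθ]; ring]
      ring
    · rw [show ((ℓ:ℝ) - 1) * β / 2 + β * ((j:ℝ) + (m:ℝ)) - θ = (m:ℝ) * β / 2 by rw [hθ]; ring]
end

section
/- Let n ≥ 3 be an integer, β = 2π/n, A_j = exp(iβj) ∈ ℂ (indices modulo n), and for 1 ≤ k < n/2 let B_j := φ_k(A_{j+1}), where φ_k(z) = (cos(kβ/2)/cos(β/2))·exp(i(k−1)β/2)·z, so that B_j is the vertex A_jA_{j+k} ∩ A_{j+1}A_{j+1+k} of the k-th inner n-gon 𝒜_k. Let r, i be integers with 1 ≤ r < n/2, r/2 < i, and 2i − r + k + 1 < n/2. If B_i lies on the line through A_0 and A_r, then B_{r−k−i−1} (index modulo n) also lies on the line through A_0 and A_r; in particular, the four points A_0, A_r, B_i, B_{r−k−i−1} are collinear over ℝ, so the r-th diagonal A_0A_r of the n-gon lies on a common line with the (2i−r+k+1)-th diagonal B_iB_{r−k−i−1} of 𝒜_k. -/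
open Real

/-- with `B j = φ_k (A (j+1))` the vertices of the `k`-th inner `n`-gon,
and integers `r, i` with `1 ≤ r < n/2`, `r/2 < i`, `2i − r + k + 1 < n/2`:
if `B i` lies on the line through `A 0` and `A r`, then so does `B (r−k−i−1)`, and the
four points `A 0, A r, B i, B (r−k−i−1)` are collinear over ℝ. -/
theorem stmt_4 (n : ℤ) (hn : 3 ≤ n) (β : ℝ) (hβ : β = 2 * π / n)
    (A : ℤ → ℂ) (hA : ∀ j : ℤ, A j = Complex.exp ((β * j : ℝ) * Complex.I))
    (k : ℤ) (hk1 : 1 ≤ k) (hk2 : (k : ℝ) < n / 2)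
    (φ : ℂ → ℂ)
    (hφ : ∀ z : ℂ, φ z = (Real.cos (k * β / 2) / Real.cos (β / 2) : ℝ) *
      Complex.exp (((k - 1) * β / 2 : ℝ) * Complex.I) * z)
    (B : ℤ → ℂ) (hB : ∀ j : ℤ, B j = φ (A (j + 1)))
    (r i : ℤ) (hr1 : 1 ≤ r) (hr2 : (r : ℝ) < n / 2)
    (hi : (r : ℝ) / 2 < i) (h2i : (2 * i - r + k + 1 : ℝ) < n / 2)
    (hBi : ∃ t : ℝ, B i = A 0 + t • (A r - A 0)) :
    (∃ t : ℝ, B (r - k - i - 1) = A 0 + t • (A r - A 0)) ∧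
      Collinear ℝ ({A 0, A r, B i, B (r - k - i - 1)} : Set ℂ) := by
  obtain ⟨t, ht⟩ := hBi
  set c : ℝ := Real.cos (k * β / 2) / Real.cos (β / 2) with hc
  -- uniform formula for B j
  have hBform : ∀ j : ℤ, B j =
      (c : ℂ) * Complex.exp ((((k - 1) * β / 2 + β * (j + 1)) : ℝ) * Complex.I) := by
    intro j
    rw [hB, hφ, hA, mul_assoc, ← Complex.exp_add]
    push_cast
    ring_nf
  have hconj : ∀ x : ℝ, (starRingEnd ℂ) (Complex.exp ((x : ℝ) * Complex.I)) =
      Complex.exp ((-x : ℝ) * Complex.I) := by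
    intro x
    rw [← Complex.exp_conj]
    simp [Complex.conj_I]
  have hA0 : A 0 = 1 := by rw [hA]; simp
  have hAr : A r = Complex.exp ((β * r : ℝ) * Complex.I) := hA r
  set E : ℂ := Complex.exp ((β * r : ℝ) * Complex.I) with hE
  have hEunit : E * Complex.exp ((-(β * r) : ℝ) * Complex.I) = 1 := by
    rw [hE, ← Complex.exp_add]
    push_cast
    ring_nf
    exact Complex.exp_zero
  -- key reflection identity
  have hkey : B (r - k - i - 1) = E * (starRingEnd ℂ) (B i) := by
    rw [hBform, hBform, map_mul, Complex.conj_ofReal, hconj, hE,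
      mul_comm (Complex.exp _), mul_assoc, ← Complex.exp_add]
    push_cast
    ring_nf
  have hB' : B (r - k - i - 1) = A 0 + (1 - t) • (A r - A 0) := by
    rw [hkey, ht, hA0, hAr, map_add, map_one, Complex.real_smul, map_mul,
      Complex.conj_ofReal, map_sub, map_one, hconj]
    rw [Complex.real_smul]
    push_cast
    push_cast at hEunit
    linear_combination (t : ℂ) * hEunit
  refine ⟨⟨1 - t, hB'⟩, ?_⟩
  rw [collinear_iff_exists_forall_eq_smul_vadd]
  refine ⟨A 0, A r - A 0, ?_⟩
  intro p hp
  simp only [Set.mem_insert_iff, Set.mem_singleton_iff] at hp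
  rcases hp with h | h | h | h
  · exact ⟨0, by simp [h]⟩
  · exact ⟨1, by simp [h]⟩
  · exact ⟨t, by rw [h, ht]; simp [add_comm]⟩
  · exact ⟨1 - t, by rw [h, hB']; simp [add_comm]⟩
end

section
/- Let k ≥ 2 be an integer, n = 6k, β = 2π/n, A_j = exp(iβj) ∈ ℂ (indices modulo n), and φ_{2k}(z) = (cos(2kβ/2)/cos(β/2))·exp(i(2k−1)β/2)·z, so that B_j := φ_{2k}(A_{j+1}) is the vertex A_jA_{j+2k} ∩ A_{j+1}A_{j+1+2k} of the (2k)-th inner n-gon 𝒜_{2k}. Then the four points A_0, A_{3k−1}, B_{2k−2} = φ_{2k}(A_{2k−1}), and B_{5k} = φ_{2k}(A_{5k+1}) are collinear over ℝ; that is, the (3k−1)-th diagonal A_0A_{3k−1} of the regular 6k-gon passes through two vertices of 𝒜_{2k}. -/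
/-!
Put `θ = β / 2 = π / 6k` and `ζ = exp (iθ)`. Then `A j = ζ ^ (2j)`, `ζ ^ (6k) = -1`, and `φ_{2k}` is
multiplication by `c ζ ^ (2k - 1)` with `c = cos (π / 3) / cos θ = 1 / (ζ + ζ⁻¹)`. The four points
become `1, -ζ⁻², -c ζ⁻³, c ζ`, and the relation `c (ζ + ζ⁻¹) = 1` places each of them on the line
through `1` in direction `ζ⁻¹`.
-/

open Real

theorem collinear_one_of_mul_add_inv_eq_one {w : ℂ} (hw : w ≠ 0) {c : ℝ}
    (h : c * (w + w⁻¹) = 1) :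
    Collinear ℝ ({1, -w⁻¹ ^ 2, c * -w⁻¹ ^ 3, c * w} : Set ℂ) := by
  have hc : (c : ℂ) ≠ 0 := left_ne_zero_of_mul_eq_one h
  have h' : c * (w ^ 2 + 1) = w := by
    field_simp at h
    linear_combination h
  rw [collinear_iff_of_mem (Set.mem_insert 1 _)]
  refine ⟨-w⁻¹, ?_⟩
  simp only [Set.mem_insert_iff, Set.mem_singleton_iff, vadd_eq_add, Complex.real_smul]
  rintro p (rfl | rfl | rfl | rfl)
  · exact ⟨0, by simp⟩
  · refine ⟨1 / c, ?_⟩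
    push_cast
    field_simp
    linear_combination -h'
  · refine ⟨1 / c - c, ?_⟩
    push_cast
    field_simp
    linear_combination (-(c : ℂ) - w) * h'
  · refine ⟨c, ?_⟩
    field_simp
    linear_combination h'

theorem collinear_zpow_of_zpow_six_mul_eq_neg_one {ζ : ℂ} (hζ : ζ ≠ 0) {c : ℝ}
    (hc : c * (ζ + ζ⁻¹) = 1) {k : ℤ} (h6k : ζ ^ (6 * k) = -1) :
    Collinear ℝ ({ζ ^ (2 * 0), ζ ^ (2 * (3 * k - 1)),
      c * (ζ ^ (2 * k - 1) * ζ ^ (2 * (2 * k - 1))),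
      c * (ζ ^ (2 * k - 1) * ζ ^ (2 * (5 * k + 1)))} : Set ℂ) := by
  have hpow (m : ℤ) : ζ ^ (6 * k + m) = -ζ ^ m := by
    rw [zpow_add₀ hζ, h6k, neg_one_mul]
  rw [← zpow_add₀ hζ, ← zpow_add₀ hζ, show 2 * (3 * k - 1) = 6 * k + -2 by ring,
    show 2 * k - 1 + 2 * (2 * k - 1) = 6 * k + -3 by ring,
    show 2 * k - 1 + 2 * (5 * k + 1) = 6 * k + (6 * k + 1) by ring, hpow, hpow, hpow, hpow]
  simpa using collinear_one_of_mul_add_inv_eq_one hζ hc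

theorem Complex.exp_ofReal_mul_I_add_inv (θ : ℝ) :
    Complex.exp (θ * Complex.I) + (Complex.exp (θ * Complex.I))⁻¹ = 2 * Real.cos θ := by
  rw [← Complex.exp_neg, Complex.ofReal_cos, Complex.two_cos, neg_mul]

theorem Complex.exp_ofReal_int_mul_mul_I (θ : ℝ) (m : ℤ) :
    Complex.exp ((m * θ : ℝ) * Complex.I) = Complex.exp (θ * Complex.I) ^ m := by
  rw [← Complex.exp_int_mul]
  push_cast
  ring_nf

/-- in the regular `6k`-gon (`k ≥ 2`), with `B j = φ_{2k}(A (j+1))` the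
vertices of the `2k`-th inner polygon, the four points
`A 0, A (3k−1), φ_{2k}(A (2k−1)), φ_{2k}(A (5k+1))` are collinear over ℝ. -/
theorem stmt_6 (k : ℤ) (hk : 2 ≤ k) (n : ℤ) (hn : n = 6 * k)
    (β : ℝ) (hβ : β = 2 * π / n)
    (A : ℤ → ℂ) (hA : ∀ j : ℤ, A j = Complex.exp ((β * j : ℝ) * Complex.I))
    (φ : ℂ → ℂ)
    (hφ : ∀ z : ℂ, φ z = (Real.cos (2 * k * β / 2) / Real.cos (β / 2) : ℝ) *
      Complex.exp (((2 * k - 1) * β / 2 : ℝ) * Complex.I) * z) :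
    Collinear ℝ ({A 0, A (3 * k - 1), φ (A (2 * k - 1)), φ (A (5 * k + 1))} : Set ℂ) := by
  have hk2 : (2 : ℝ) ≤ k := by exact_mod_cast hk
  obtain ⟨θ, rfl, hθ⟩ : ∃ θ : ℝ, β = 2 * θ ∧ 6 * k * θ = π :=
    ⟨π / (6 * k), by rw [hβ, hn]; push_cast; ring, by field_simp⟩
  have hθ0 : 0 < θ := pos_of_mul_pos_right (hθ ▸ pi_pos) (by positivity)
  have hcos : Real.cos θ ≠ 0 := (Real.cos_pos_of_mem_Ioo ⟨by linarith [pi_pos],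
    by nlinarith [pi_pos, mul_nonneg hθ0.le (sub_nonneg.2 hk2)]⟩).ne'
  set ζ := Complex.exp (θ * Complex.I)
  set c : ℝ := (2 * Real.cos θ)⁻¹
  have hA' (j : ℤ) : A j = ζ ^ (2 * j) := by
    rw [hA, ← Complex.exp_ofReal_int_mul_mul_I]
    push_cast
    ring_nf
  have hφ' (z : ℂ) : φ z = c * (ζ ^ (2 * k - 1) * z) := by
    rw [hφ, show 2 * k * (2 * θ) / 2 = π / 3 by linear_combination (1 / 3 : ℝ) * hθ,
      show 2 * θ / 2 = θ by ring, Real.cos_pi_div_three, div_div, one_div,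
      show (2 * k - 1) * (2 * θ) / 2 = ((2 * k - 1 : ℤ) : ℝ) * θ by push_cast; ring,
      Complex.exp_ofReal_int_mul_mul_I, mul_assoc]
  have hc : c * (ζ + ζ⁻¹) = 1 := by
    rw [Complex.exp_ofReal_mul_I_add_inv]
    exact_mod_cast inv_mul_cancel₀ (mul_ne_zero two_ne_zero hcos)
  have h6k : ζ ^ (6 * k) = -1 := by
    rw [← Complex.exp_ofReal_int_mul_mul_I, show ((6 * k : ℤ) : ℝ) * θ = π by exact_mod_cast hθ,
      Complex.exp_pi_mul_I]
  simp only [hA', hφ']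
  exact collinear_zpow_of_zpow_six_mul_eq_neg_one (Complex.exp_ne_zero _) hc h6k
end

section
/- Let k ≥ 1 be an integer, n = 12k + 6, β = 2π/n, and A_j = exp(iβj) ∈ ℂ (indices modulo n) the vertices of the regular (12k+6)-gon inscribed in the unit circle. Then the three diagonals A_0A_{3k+1}, A_1A_{3k+2}, and A_{2k+1}A_{10k+5} are concurrent: there exists a point of ℂ lying on all three lines. Equivalently, the intersection point φ_{3k+1}(A_1) of the consecutive (3k+1)-th diagonals A_0A_{3k+1} and A_1A_{3k+2} lies on the line through A_{2k+1} and A_{10k+5}. (This extra incidence is why K(12k+6; 3k+1, 4k+2), K(12k+6; 3k+2, 4k+2), K(12k+6; 3k+1, 3k+2) fail to be ((3n)_4) configurations.) -/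
/-!
With `θ = β / 2`, the chord from `e^{ia}` to `e^{ib}` is the line `re (z e^{-i(a+b)/2}) = cos ((b-a)/2)`.
Hence the `k`-th diagonals `A_{j-1}A_{j-1+k}` and `A_jA_{j+k}` are the lines
`re (z e^{-iθ(2j+k-2)}) = cos (kθ)` and `re (z e^{-iθ(2j+k)}) = cos (kθ)`, and `φ_k(A_j)` lies on
both. For `n = 12k + 6` and `k' = 3k + 1` we have `(2k' + 1)θ = π/2`, so
`re φ_{k'}(A_1) = cos (k'θ) sin (k'θ) / cos θ = sin (2k'θ) / (2 cos θ) = 1/2`, while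
`A_{2k+1} = e^{iπ/3}` and `A_{10k+5} = e^{-iπ/3}` span the line `re z = 1/2`.
-/

open Real

noncomputable def vertex (β : ℝ) (j : ℤ) : ℂ := Complex.exp ((β * j : ℝ) * Complex.I)

/-- The paper's `φ_k`, for angular step `β`. -/
noncomputable def diagSimilarity (β : ℝ) (k : ℤ) (z : ℂ) : ℂ :=
  ((cos (k * β / 2) / cos (β / 2) : ℝ) : ℂ) * Complex.exp (((k - 1) * β / 2 : ℝ) * Complex.I) * z

lemma exp_ofReal_mul_I_mul_exp (x y : ℝ) :
    Complex.exp (x * Complex.I) * Complex.exp (y * Complex.I) =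
      Complex.exp ((x + y : ℝ) * Complex.I) := by
  rw [← Complex.exp_add]; push_cast; ring_nf

lemma exists_eq_exp_add_smul_of_re_eq_cos (a b : ℝ) (z : ℂ) (hsin : sin ((b - a) / 2) ≠ 0)
    (hz : (z * Complex.exp (-((a + b) / 2 : ℝ) * Complex.I)).re = cos ((b - a) / 2)) :
    ∃ t : ℝ, z = Complex.exp (a * Complex.I) +
      t • (Complex.exp (b * Complex.I) - Complex.exp (a * Complex.I)) := by
  set w := z * Complex.exp (-((a + b) / 2 : ℝ) * Complex.I)
  refine ⟨(w.im / sin ((b - a) / 2) + 1) / 2, ?_⟩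
  have hzw : z = w * Complex.exp (((a + b) / 2 : ℝ) * Complex.I) := by
    rw [mul_assoc, ← Complex.exp_add]; push_cast; simp
  have ha : Complex.exp (a * Complex.I) = Complex.exp (-((b - a) / 2 : ℝ) * Complex.I) *
      Complex.exp (((a + b) / 2 : ℝ) * Complex.I) := by
    rw [← Complex.exp_add]; push_cast; ring_nf
  have hb : Complex.exp (b * Complex.I) = Complex.exp (((b - a) / 2 : ℝ) * Complex.I) *
      Complex.exp (((a + b) / 2 : ℝ) * Complex.I) := by
    rw [← Complex.exp_add]; push_cast; ring_nf
  rw [hzw, ha, hb, Complex.real_smul, ← sub_mul, ← mul_assoc, ← add_mul]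
  congr 1
  generalize (b - a) / 2 = h at *
  rw [← Complex.ofReal_neg]
  apply Complex.ext <;>
    simp only [Complex.add_re, Complex.add_im, Complex.sub_re, Complex.sub_im, Complex.re_ofReal_mul,
      Complex.im_ofReal_mul, Complex.exp_ofReal_mul_I_re, Complex.exp_ofReal_mul_I_im, cos_neg, sin_neg]
  · linarith
  · field_simp
    ring

lemma re_diagSimilarity_vertex_mul_exp (β : ℝ) (k j : ℤ) (x : ℝ) :
    (diagSimilarity β k (vertex β j) * Complex.exp (x * Complex.I)).re =
      cos (k * β / 2) / cos (β / 2) * cos ((k - 1) * β / 2 + (β * j + x)) := by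
  rw [diagSimilarity, vertex, mul_assoc, mul_assoc, exp_ofReal_mul_I_mul_exp,
    exp_ofReal_mul_I_mul_exp, Complex.re_ofReal_mul, Complex.exp_ofReal_mul_I_re]

lemma diagSimilarity_mem_diagonal (β : ℝ) (k j : ℤ) (hcos : cos (β / 2) ≠ 0)
    (hsin : sin (k * β / 2) ≠ 0) :
    ∃ t : ℝ, diagSimilarity β k (vertex β j) = vertex β j + t • (vertex β (j + k) - vertex β j) := by
  apply exists_eq_exp_add_smul_of_re_eq_cos
  · convert hsin using 2; push_cast; ring
  · rw [← Complex.ofReal_neg, re_diagSimilarity_vertex_mul_exp]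
    push_cast
    rw [show (k - 1) * β / 2 + (β * j + -((β * j + β * (j + k)) / 2)) = -(β / 2) by ring, cos_neg,
      div_mul_cancel₀ _ hcos]
    congr 1; ring

lemma diagSimilarity_mem_prev_diagonal (β : ℝ) (k j : ℤ) (hcos : cos (β / 2) ≠ 0)
    (hsin : sin (k * β / 2) ≠ 0) :
    ∃ t : ℝ, diagSimilarity β k (vertex β j) =
      vertex β (j - 1) + t • (vertex β (j - 1 + k) - vertex β (j - 1)) := by
  apply exists_eq_exp_add_smul_of_re_eq_cos
  · convert hsin using 2; push_cast; ring
  · rw [← Complex.ofReal_neg, re_diagSimilarity_vertex_mul_exp]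
    push_cast
    rw [show (k - 1) * β / 2 + (β * j + -((β * (j - 1) + β * (j - 1 + k)) / 2)) = β / 2 by ring,
      div_mul_cancel₀ _ hcos]
    congr 1; ring

lemma re_diagSimilarity_vertex_one (β : ℝ) (k : ℤ) (hβ : (2 * k + 1) * β = π)
    (hcos : cos (β / 2) ≠ 0) : (diagSimilarity β k (vertex β 1)).re = 1 / 2 := by
  have h := re_diagSimilarity_vertex_mul_exp β k 1 0
  rw [Complex.ofReal_zero, zero_mul, Complex.exp_zero, mul_one] at h
  rw [h]
  have hsin : cos ((k - 1) * β / 2 + (β * (1 : ℤ) + 0)) = sin (k * β / 2) := by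
    rw [← cos_pi_div_two_sub, ← hβ]; congr 1; push_cast; ring
  have hdouble : cos (β / 2) = 2 * sin (k * β / 2) * cos (k * β / 2) := by
    rw [← sin_two_mul, ← cos_pi_div_two_sub, ← hβ]; congr 1; ring
  rw [hsin]
  field_simp
  linarith

lemma exists_mem_line_vertex_of_re_eq_half (β : ℝ) (m : ℤ) (hβ : 3 * m * β = π) (z : ℂ)
    (hz : z.re = 1 / 2) : ∃ t : ℝ, z = vertex β m + t • (vertex β (5 * m) - vertex β m) := by
  have hhalf : (β * ↑(5 * m) - β * m) / 2 = π - π / 3 := by push_cast; linarith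
  have hmid : (β * m + β * ↑(5 * m)) / 2 = π := by push_cast; linarith
  apply exists_eq_exp_add_smul_of_re_eq_cos
  · rw [hhalf, sin_pi_sub, sin_pi_div_three]; positivity
  · rw [hmid, hhalf, cos_pi_sub, cos_pi_div_three, neg_mul, Complex.exp_neg, Complex.exp_pi_mul_I]
    simp [hz]

/-- in the regular `(12k+6)`-gon (`k ≥ 1`), the three diagonals
`A 0 A (3k+1)`, `A 1 A (3k+2)` and `A (2k+1) A (10k+5)` are concurrent:
some point of ℂ lies on all three lines. -/
theorem stmt_7 (k : ℤ) (hk : 1 ≤ k) (n : ℤ) (hn : n = 12 * k + 6)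
    (β : ℝ) (hβ : β = 2 * π / n)
    (A : ℤ → ℂ) (hA : ∀ j : ℤ, A j = Complex.exp ((β * j : ℝ) * Complex.I)) :
    ∃ p : ℂ,
      (∃ t : ℝ, p = A 0 + t • (A (3 * k + 1) - A 0)) ∧
      (∃ t : ℝ, p = A 1 + t • (A (3 * k + 2) - A 1)) ∧
      (∃ t : ℝ, p = A (2 * k + 1) + t • (A (10 * k + 5) - A (2 * k + 1))) := by
  obtain rfl : A = vertex β := funext hA
  have hk' : (1 : ℝ) ≤ k := by exact_mod_cast hk
  have hβpos : 0 < β := by rw [hβ, hn]; push_cast; positivity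
  have hβπ : (6 * k + 3) * β = π := by rw [hβ, hn]; push_cast; field_simp; ring
  have hcos : cos (β / 2) ≠ 0 := (cos_pos_of_mem_Ioo ⟨by linarith [pi_pos], by nlinarith⟩).ne'
  have hsin : sin (((3 * k + 1 : ℤ) : ℝ) * β / 2) ≠ 0 := by
    push_cast; exact (sin_pos_of_pos_of_lt_pi (by positivity) (by nlinarith)).ne'
  refine ⟨diagSimilarity β (3 * k + 1) (vertex β 1), ?_, ?_, ?_⟩
  · simpa using diagSimilarity_mem_prev_diagonal β (3 * k + 1) 1 hcos hsin
  · rw [show 3 * k + 2 = 1 + (3 * k + 1) by ring]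
    exact diagSimilarity_mem_diagonal β (3 * k + 1) 1 hcos hsin
  · rw [show 10 * k + 5 = 5 * (2 * k + 1) by ring]
    refine exists_mem_line_vertex_of_re_eq_half β (2 * k + 1) (by push_cast; linarith) _ ?_
    exact re_diagSimilarity_vertex_one β _ (by push_cast; linarith) hcos
end

section
/- Let k ≥ 1 be an integer, n = 12k + 6, β = 2π/n, A_j = exp(iβj) ∈ ℂ (indices modulo n), and φ_{3k+1}(z) = (cos((3k+1)β/2)/cos(β/2))·exp(i(3k)β/2)·z, so that B_j := φ_{3k+1}(A_{j+1}) is the vertex A_jA_{j+3k+1} ∩ A_{j+1}A_{j+3k+2} of the (3k+1)-th inner n-gon 𝒜_{3k+1}. Then the four points A_0, A_{4k+2}, B_{2k+1} = φ_{3k+1}(A_{2k+2}), and B_{11k+5} = φ_{3k+1}(A_{11k+6}) are collinear over ℝ; that is, the (4k+2)-th diagonal A_0A_{4k+2} of the regular (12k+6)-gon passes through two vertices of 𝒜_{3k+1}. -/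
open Real

/-- in the regular `(12k+6)`-gon (`k ≥ 1`), with `B j = φ_{3k+1}(A (j+1))`
the vertices of the `(3k+1)`-th inner polygon, the four points
`A 0, A (4k+2), φ_{3k+1}(A (2k+2)), φ_{3k+1}(A (11k+6))` are collinear over ℝ. -/
theorem stmt_8 (k : ℤ) (hk : 1 ≤ k) (n : ℤ) (hn : n = 12 * k + 6)
    (β : ℝ) (hβ : β = 2 * π / n)
    (A : ℤ → ℂ) (hA : ∀ j : ℤ, A j = Complex.exp ((β * j : ℝ) * Complex.I))
    (φ : ℂ → ℂ)
    (hφ : ∀ z : ℂ, φ z = (Real.cos ((3 * k + 1) * β / 2) / Real.cos (β / 2) : ℝ) *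
      Complex.exp ((3 * k * β / 2 : ℝ) * Complex.I) * z) :
    Collinear ℝ
      ({A 0, A (4 * k + 2), φ (A (2 * k + 2)), φ (A (11 * k + 6))} : Set ℂ) := by
  have hk1 : (1:ℝ) ≤ (k:ℝ) := by exact_mod_cast hk
  have hβn : β * (12 * (k:ℝ) + 6) = 2 * π := by
    have h0 : (12:ℝ) * (k:ℝ) + 6 ≠ 0 := by nlinarith
    rw [hβ, hn]
    push_cast
    field_simp
  have hβpos : 0 < β := by nlinarith [Real.pi_pos]
  have hβltpi : β < π := by nlinarith [Real.pi_pos]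
  have hcosβ2 : 0 < Real.cos (β/2) :=
    Real.cos_pos_of_mem_Ioo ⟨by linarith, by linarith⟩
  set s : ℝ := Real.sqrt 3 with hs
  have hs2 : s ^ 2 = 3 := Real.sq_sqrt (by norm_num)
  have hspos : 0 < s := Real.sqrt_pos.mpr (by norm_num)
  set δ : ℝ := (9*(k:ℝ)+4)*β/2 with hδ
  set R : ℝ := Real.cos ((3 * (k:ℝ) + 1) * β / 2) / Real.cos (β / 2) with hR
  -- key real identity : R * cos δ = -1/2
  have hRc : R * Real.cos δ = -(1/2) := by
    have e1 : (3*(k:ℝ)+1)*β/2 + δ = π - β/2 := by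
      rw [hδ]; linear_combination hβn/2
    have e2 : δ - (3*(k:ℝ)+1)*β/2 = π/2 := by
      rw [hδ]; linear_combination hβn/4
    have key : Real.cos ((3*(k:ℝ)+1)*β/2 + δ) + Real.cos (δ - (3*(k:ℝ)+1)*β/2)
        = 2 * (Real.cos ((3 * (k:ℝ) + 1) * β / 2) * Real.cos δ) := by
      rw [Real.cos_add, Real.cos_sub]; ring
    rw [e1, e2, Real.cos_pi_sub, Real.cos_pi_div_two] at key
    rw [hR]
    field_simp
    linarith
  set x : ℂ := (1 + (s:ℂ) * Complex.I)/2 with hx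
  have hexp3 : Complex.exp ((π/3 : ℝ) * Complex.I) = x := by
    rw [Complex.exp_mul_I, ← Complex.ofReal_cos, ← Complex.ofReal_sin,
      Real.cos_pi_div_three, Real.sin_pi_div_three, hx]
    push_cast
    ring
  have hE : ∀ θ : ℝ, Complex.exp (((4*π/3 + θ : ℝ) : ℂ) * Complex.I)
      = -x * ((Real.cos θ : ℂ) + (Real.sin θ : ℂ) * Complex.I) := by
    intro θ
    have h1 : ((4*π/3 + θ : ℝ) : ℂ) * Complex.I
        = (π:ℝ) * Complex.I + (((π/3 : ℝ) : ℂ) * Complex.I + ((θ:ℝ) : ℂ) * Complex.I) := by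
      push_cast; ring
    rw [h1, Complex.exp_add, Complex.exp_add, Complex.exp_pi_mul_I, hexp3,
      Complex.exp_mul_I, ← Complex.ofReal_cos, ← Complex.ofReal_sin]
    ring
  -- casts of key identities to ℂ
  have h1C : (R:ℂ) * Complex.cos (δ:ℂ) = -(1/2) := by
    have := congrArg (fun t : ℝ => (t : ℂ)) hRc
    push_cast at this
    convert this using 2
  have h2C : ((s:ℝ):ℂ)^2 = 3 := by
    rw [← Complex.ofReal_pow, hs2]
    norm_num
  have h3C : Complex.I^2 = -1 := Complex.I_sq
  -- the four points
  have hA0 : A 0 = 1 := by rw [hA]; push_cast; simp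
  have hA2 : A (4*k+2) = x^2 := by
    rw [hA]
    have hang : β * ((4*k+2 : ℤ) : ℝ) = 2*π/3 := by
      push_cast; linear_combination hβn/3
    rw [hang]
    have h2 : ((2*π/3 : ℝ) : ℂ) * Complex.I
        = ((π/3 : ℝ) : ℂ) * Complex.I + ((π/3 : ℝ) : ℂ) * Complex.I := by
      push_cast; ring
    rw [h2, Complex.exp_add, hexp3]
    ring
  have hP3 : φ (A (2*k+2))
      = ((1/2 + R * Real.sin δ * s / 3 : ℝ) : ℂ) * (x^2 - 1) + 1 := by
    rw [hA, hφ]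
    rw [mul_assoc, ← Complex.exp_add, ← add_mul, ← Complex.ofReal_add]
    have hang : (3 * (k:ℝ) * β / 2 + β * ((2*k+2 : ℤ) : ℝ)) = 4*π/3 + (-δ) := by
      rw [hδ]; push_cast; linear_combination (2/3)*hβn
    rw [hang, hE (-δ), Real.cos_neg, Real.sin_neg, hx]
    push_cast
    linear_combination (-(1:ℂ)/2 - (s:ℂ)*Complex.I/2) * h1C
      + ((1:ℂ)/8 - (R:ℂ)*Complex.sin (δ:ℂ)*Complex.I/6 + (R:ℂ)*(s:ℂ)*Complex.sin (δ:ℂ)/12) * h2C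
      + (-((s:ℂ))^2/8 + (R:ℂ)*(s:ℂ)*Complex.sin (δ:ℂ)/2
          - (R:ℂ)*((s:ℂ))^3*Complex.sin (δ:ℂ)/12) * h3C
  have hP4 : φ (A (11*k+6))
      = ((1/2 - R * Real.sin δ * s / 3 : ℝ) : ℂ) * (x^2 - 1) + 1 := by
    rw [hA, hφ]
    rw [mul_assoc, ← Complex.exp_add, ← add_mul, ← Complex.ofReal_add]
    have hang : (3 * (k:ℝ) * β / 2 + β * ((11*k+6 : ℤ) : ℝ)) = 4*π/3 + δ := by
      rw [hδ]; push_cast; linear_combination (2/3)*hβn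
    rw [hang, hE δ, hx]
    push_cast
    linear_combination (-(1:ℂ)/2 - (s:ℂ)*Complex.I/2) * h1C
      + ((1:ℂ)/8 + (R:ℂ)*Complex.sin (δ:ℂ)*Complex.I/6 - (R:ℂ)*(s:ℂ)*Complex.sin (δ:ℂ)/12) * h2C
      + (-((s:ℂ))^2/8 - (R:ℂ)*(s:ℂ)*Complex.sin (δ:ℂ)/2
          + (R:ℂ)*((s:ℂ))^3*Complex.sin (δ:ℂ)/12) * h3C
  -- collinearity
  rw [collinear_iff_of_mem (Set.mem_insert (A 0) _)]
  refine ⟨x^2 - 1, ?_⟩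
  intro p hp
  simp only [Set.mem_insert_iff, Set.mem_singleton_iff] at hp
  rcases hp with h | h | h | h
  · exact ⟨0, by rw [h]; simp⟩
  · refine ⟨1, ?_⟩
    rw [h, hA2, hA0]
    simp only [one_smul, vadd_eq_add]
    ring
  · refine ⟨1/2 + R * Real.sin δ * s / 3, ?_⟩
    rw [h, hP3, hA0]
    simp only [vadd_eq_add, Complex.real_smul]
  · refine ⟨1/2 - R * Real.sin δ * s / 3, ?_⟩
    rw [h, hP4, hA0]
    simp only [vadd_eq_add, Complex.real_smul]
end

section
/- Let n = 30, β = 2π/30, and A_j = exp(iβj) ∈ ℂ (indices modulo 30) the vertices of the regular 30-gon inscribed in the unit circle. Then the three diagonals A_0A_4, A_1A_5, and A_3A_26 are concurrent: there exists a point of ℂ lying on all three lines. Equivalently, the intersection point φ_4(A_1) = (cos(4β/2)/cos(β/2))·exp(i·3β/2)·exp(iβ) of the consecutive 4-th diagonals A_0A_4 and A_1A_5 lies on the line through A_3 and A_26. (This sporadic extra incidence is why K(30;4,6), K(30;4,7), K(30;6,7) fail to be (90_4) configurations.) -/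
open Real

/-!
A point `z` lies on the chord through two points `a ≠ b` of the unit circle iff
`z + a b z̄ = a + b`. Solving this for two chords gives their intersection point and its
conjugate in closed form, so a third chord passes through it iff a polynomial identity holds
in the six endpoints. For the diagonals `A₀A₄`, `A₁A₅`, `A₃A₂₆` of the regular 30-gon the
endpoints are powers of a primitive 30th root of unity `ω`, and the identity follows by
reducing modulo the cyclotomic polynomial `Φ₃₀`.
-/

open ComplexConjugate

/-- `Φ₃₀(ω) = 0`, obtained from the primitive roots `ω ^ 10`, `ω ^ 6` and `ω ^ 15` of orders
`3`, `5` and `2`. -/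
theorem IsPrimitiveRoot.cyclotomic_thirty_eq_zero {R : Type*} [CommRing R] [IsDomain R]
    {ω : R} (hω : IsPrimitiveRoot ω 30) :
    ω ^ 8 + ω ^ 7 - ω ^ 5 - ω ^ 4 - ω ^ 3 + ω + 1 = 0 := by
  have h3 := (hω.pow_of_dvd (p := 10) (by norm_num) (by norm_num)).geom_sum_eq_zero (by norm_num)
  have h5 := (hω.pow_of_dvd (p := 6) (by norm_num) (by norm_num)).geom_sum_eq_zero (by norm_num)
  have h2 : IsPrimitiveRoot (ω ^ 15) 2 := hω.pow_of_dvd (by norm_num) (by norm_num)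
  replace h2 := h2.eq_neg_one_of_two_right
  simp only [Finset.sum_range_succ, Finset.sum_range_zero] at h3 h5
  linear_combination (1 + ω ^ 2 + ω ^ 8 - ω ^ 12) * h3 + (ω ^ 8 - ω ^ 2 - ω ^ 4) * h5
    + (ω - ω ^ 3 - ω ^ 5 + ω ^ 7) * h2

namespace Complex

theorem exists_eq_add_smul_of_conj_div_eq {a b z : ℂ} (hab : a ≠ b)
    (h : conj ((z - a) / (b - a)) = (z - a) / (b - a)) : ∃ t : ℝ, z = a + t • (b - a) := by
  obtain ⟨t, ht⟩ := conj_eq_iff_real.mp h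
  rw [div_eq_iff (sub_ne_zero.mpr hab.symm)] at ht
  exact ⟨t, by rw [real_smul, ← ht]; ring⟩

theorem exists_eq_add_smul_of_chord_eq {a b z : ℂ} (ha : ‖a‖ = 1) (hb : ‖b‖ = 1) (hab : a ≠ b)
    (hz : z + a * b * conj z = a + b) : ∃ t : ℝ, z = a + t • (b - a) := by
  have ha0 : a ≠ 0 := ne_zero_of_norm_ne_zero (by simp [ha])
  have hb0 : b ≠ 0 := ne_zero_of_norm_ne_zero (by simp [hb])
  have hz' : conj z = (a + b - z) / (a * b) := by
    field_simp
    linear_combination hz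
  refine exists_eq_add_smul_of_conj_div_eq hab ?_
  rw [map_div₀, map_sub, map_sub, ← inv_eq_conj ha, ← inv_eq_conj hb, hz']
  have hba : b - a ≠ 0 := sub_ne_zero.mpr hab.symm
  field_simp
  ring

theorem exists_mem_three_chords {a b c d e f : ℂ} (ha : ‖a‖ = 1) (hb : ‖b‖ = 1) (hc : ‖c‖ = 1)
    (hd : ‖d‖ = 1) (he : ‖e‖ = 1) (hf : ‖f‖ = 1) (hab : a ≠ b) (hcd : c ≠ d) (hef : e ≠ f)
    (hpar : a * b ≠ c * d)
    (h : a * b * (c + d) - c * d * (a + b) + e * f * (a + b - (c + d))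
      = (e + f) * (a * b - c * d)) :
    ∃ p : ℂ, (∃ t : ℝ, p = a + t • (b - a)) ∧ (∃ t : ℝ, p = c + t • (d - c)) ∧
      (∃ t : ℝ, p = e + t • (f - e)) := by
  have ha0 : a ≠ 0 := ne_zero_of_norm_ne_zero (by simp [ha])
  have hb0 : b ≠ 0 := ne_zero_of_norm_ne_zero (by simp [hb])
  have hc0 : c ≠ 0 := ne_zero_of_norm_ne_zero (by simp [hc])
  have hd0 : d ≠ 0 := ne_zero_of_norm_ne_zero (by simp [hd])
  have hpar' : a * b - c * d ≠ 0 := sub_ne_zero.mpr hpar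
  set p := (a * b * (c + d) - c * d * (a + b)) / (a * b - c * d)
  have hp : conj p = (a + b - (c + d)) / (a * b - c * d) := by
    simp only [p, map_div₀, map_sub, map_add, map_mul, ← inv_eq_conj ha, ← inv_eq_conj hb,
      ← inv_eq_conj hc, ← inv_eq_conj hd]
    field_simp
    ring
  refine ⟨p, exists_eq_add_smul_of_chord_eq ha hb hab ?_,
    exists_eq_add_smul_of_chord_eq hc hd hcd ?_, exists_eq_add_smul_of_chord_eq he hf hef ?_⟩
  all_goals rw [hp, ← mul_div_assoc, ← add_div, div_eq_iff hpar']
  · ring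
  · ring
  · linear_combination h

end Complex

/-- in the regular 30-gon the three diagonals
`A 0 A 4`, `A 1 A 5` and `A 3 A 26` are concurrent:
some point of ℂ lies on all three lines.  (Sporadic extra incidence behind K(30;4,6), K(30;4,7), K(30;6,7).) -/
theorem stmt_9 (β : ℝ) (hβ : β = 2 * π / 30)
    (A : ℤ → ℂ) (hA : ∀ j : ℤ, A j = Complex.exp ((β * j : ℝ) * Complex.I)) :
    ∃ p : ℂ,
      (∃ t : ℝ, p = A 0 + t • (A 4 - A 0)) ∧
      (∃ t : ℝ, p = A 1 + t • (A 5 - A 1)) ∧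
      (∃ t : ℝ, p = A 3 + t • (A 26 - A 3)) := by
  set ω := Complex.exp (2 * π * Complex.I / (30 : ℕ))
  have hω : IsPrimitiveRoot ω 30 := Complex.isPrimitiveRoot_exp 30 (by norm_num)
  have hAω : ∀ k : ℕ, A k = ω ^ k := fun k => by
    rw [hA, ← Complex.exp_nat_mul, hβ]
    push_cast
    ring_nf
  have hnorm : ∀ k : ℕ, ‖ω ^ k‖ = 1 := fun k => by
    rw [norm_pow, hω.norm'_eq_one (by norm_num), one_pow]
  have hne : ∀ i j : ℕ, i < 30 → j < 30 → i ≠ j → ω ^ i ≠ ω ^ j :=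
    fun i j hi hj hij h => hij (hω.pow_inj hi hj h)
  rw [show A 0 = ω ^ 0 from hAω 0, show A 4 = ω ^ 4 from hAω 4, show A 1 = ω ^ 1 from hAω 1,
    show A 5 = ω ^ 5 from hAω 5, show A 3 = ω ^ 3 from hAω 3, show A 26 = ω ^ 26 from hAω 26]
  refine Complex.exists_mem_three_chords (hnorm 0) (hnorm 4) (hnorm 1) (hnorm 5) (hnorm 3)
    (hnorm 26) (hne 0 4 (by norm_num) (by norm_num) (by norm_num))
    (hne 1 5 (by norm_num) (by norm_num) (by norm_num))
    (hne 3 26 (by norm_num) (by norm_num) (by norm_num))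
    (by simpa only [← pow_add] using hne 4 6 (by norm_num) (by norm_num) (by norm_num)) ?_
  linear_combination
    (-2 + 2 * ω - ω ^ 2 - ω ^ 4 + ω ^ 5 - ω ^ 6 + ω ^ 14 - ω ^ 15 + ω ^ 16 + ω ^ 19 - ω ^ 20
      + ω ^ 21) * hω.cyclotomic_thirty_eq_zero + (-2 + ω ^ 2 + ω ^ 3 - ω ^ 4) * hω.pow_eq_one
end

section
/- Let n = 30, β = 2π/30, and A_j = exp(iβj) ∈ ℂ (indices modulo 30) the vertices of the regular 30-gon inscribed in the unit circle. Then the three diagonals A_0A_6, A_1A_7, and A_4A_23 are concurrent: there exists a point of ℂ lying on all three lines. Equivalently, the intersection point φ_6(A_1) = (cos(6β/2)/cos(β/2))·exp(i·5β/2)·exp(iβ) of the consecutive 6-th diagonals A_0A_6 and A_1A_7 lies on the line through A_4 and A_23. (This sporadic extra incidence is why K(30;6,10), K(30;6,11), K(30;10,11) fail to be (90_4) configurations.) -/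
/-!
The chord joining `e^{i(m-h)}` and `e^{i(m+h)}` is the line of points `e^{im} (cos h + i s)`,
`s ∈ ℝ`; so `r e^{iθ}` lies on it exactly when `r cos (θ - m) = cos h`. The common point
of `A₀A₆` and `A₁A₇` is `p = (cos (π/5) / cos (π/30)) e^{7πi/30}`, and `p ∈ A₄A₂₃` reduces to
`cos (π/5) + 2 cos (π/30) cos (19π/30) = 0`. By product-to-sum this is the golden-ratio identity
`cos (π/5) - cos (2π/5) = 1/2`.
-/

open Real

section

open Complex

theorem exp_ofReal_add_mul_I (m h : ℝ) :
    exp (↑(m + h) * I) = exp (↑m * I) * (↑(Real.cos h) + ↑(Real.sin h) * I) := by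
  rw [ofReal_add, add_mul, Complex.exp_add, Complex.exp_mul_I (h : ℂ), ofReal_cos, ofReal_sin]

theorem exists_ofReal_mul_exp_eq_chord {r θ m h u v : ℝ} (hu : u = m - h) (hv : v = m + h)
    (hs : Real.sin h ≠ 0) (hr : r * Real.cos (θ - m) = Real.cos h) :
    ∃ t : ℝ, (r : ℂ) * exp (θ * I) = exp (u * I) + t • (exp (v * I) - exp (u * I)) := by
  obtain ⟨φ, rfl⟩ : ∃ φ, θ = m + φ := ⟨θ - m, by ring⟩
  rw [add_sub_cancel_left] at hr
  subst hu hv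
  refine ⟨(1 + r * Real.sin φ / Real.sin h) / 2, ?_⟩
  rw [sub_eq_add_neg, exp_ofReal_add_mul_I, exp_ofReal_add_mul_I, exp_ofReal_add_mul_I,
    Real.cos_neg, Real.sin_neg, ← hr, Complex.real_smul]
  have hs' : (Real.sin h : ℂ) ≠ 0 := ofReal_ne_zero.mpr hs
  simp only [ofReal_div, ofReal_add, ofReal_mul, ofReal_one, ofReal_ofNat, ofReal_neg]
  field_simp
  ring

end

theorem cos_pi_div_five_sub_cos_two_pi_div_five : cos (π / 5) - cos (2 * π / 5) = 1 / 2 := by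
  rw [show 2 * π / 5 = 2 * (π / 5) by ring, cos_two_mul]
  linear_combination (-1 / 2 : ℝ) * quadratic_root_cos_pi_div_five

theorem cos_pi_div_five_add_two_mul_cos_mul_cos :
    cos (π / 5) + 2 * cos (π / 30) * cos (19 * π / 30) = 0 := by
  rw [two_mul_cos_mul_cos, show π / 30 - 19 * π / 30 = -(π - 2 * π / 5) by ring, cos_neg,
    cos_pi_sub, show π / 30 + 19 * π / 30 = π - π / 3 by ring, cos_pi_sub, cos_pi_div_three]
  linear_combination cos_pi_div_five_sub_cos_two_pi_div_five

/-- in the regular 30-gon the three diagonals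
`A 0 A 6`, `A 1 A 7` and `A 4 A 23` are concurrent:
some point of ℂ lies on all three lines.  (Sporadic extra incidence behind K(30;6,10), K(30;6,11), K(30;10,11).) -/
theorem stmt_10 (β : ℝ) (hβ : β = 2 * π / 30)
    (A : ℤ → ℂ) (hA : ∀ j : ℤ, A j = Complex.exp ((β * j : ℝ) * Complex.I)) :
    ∃ p : ℂ,
      (∃ t : ℝ, p = A 0 + t • (A 6 - A 0)) ∧
      (∃ t : ℝ, p = A 1 + t • (A 7 - A 1)) ∧
      (∃ t : ℝ, p = A 4 + t • (A 23 - A 4)) := by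
  have hβj : ∀ j : ℤ, β * j = j * π / 15 := fun j => by rw [hβ]; ring
  have hsin {x : ℝ} (h0 : 0 < x) (hπ : x < π) : sin x ≠ 0 :=
    (sin_pos_of_pos_of_lt_pi h0 hπ).ne'
  have hcos : cos (π / 30) ≠ 0 :=
    (cos_pos_of_mem_Ioo ⟨by linarith [pi_pos], by linarith [pi_pos]⟩).ne'
  refine ⟨(cos (π / 5) / cos (π / 30) : ℝ) * Complex.exp ((7 * π / 30 : ℝ) * Complex.I),
    ?_, ?_, ?_⟩ <;> simp only [hA, hβj]
  · refine exists_ofReal_mul_exp_eq_chord (m := π / 5) (h := π / 5) (by push_cast; ring)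
      (by push_cast; ring) (hsin (by positivity) (by linarith [pi_pos])) ?_
    rw [show 7 * π / 30 - π / 5 = π / 30 by ring]
    field_simp
  · refine exists_ofReal_mul_exp_eq_chord (m := 4 * π / 15) (h := π / 5) (by push_cast; ring)
      (by push_cast; ring) (hsin (by positivity) (by linarith [pi_pos])) ?_
    rw [show 7 * π / 30 - 4 * π / 15 = -(π / 30) by ring, cos_neg]
    field_simp
  · refine exists_ofReal_mul_exp_eq_chord (m := 9 * π / 10) (h := 19 * π / 30)
      (by push_cast; ring) (by push_cast; ring)
      (hsin (by positivity) (by linarith [pi_pos])) ?_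
    rw [show 7 * π / 30 - 9 * π / 10 = -(π - π / 3) by ring, cos_neg, cos_pi_sub,
      cos_pi_div_three, div_mul_eq_mul_div, div_eq_iff hcos]
    linear_combination (-1 / 2 : ℝ) * cos_pi_div_five_add_two_mul_cos_mul_cos
end

section
/- Let n = 30, β = 2π/30, and A_j = exp(iβj) ∈ ℂ (indices modulo 30) the vertices of the regular 30-gon inscribed in the unit circle. Then the three diagonals A_0A_8, A_1A_9, and A_5A_22 are concurrent: there exists a point of ℂ lying on all three lines. Equivalently, the intersection point φ_8(A_1) = (cos(8β/2)/cos(β/2))·exp(i·7β/2)·exp(iβ) of the consecutive 8-th diagonals A_0A_8 and A_1A_9 lies on the line through A_5 and A_22. (This sporadic extra incidence is why K(30;8,12), K(30;8,13), K(30;12,13) fail to be (90_4) configurations.) -/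
/-!
Put `ζ = A₁ = e^{iβ}`, a primitive 30th root of unity, so that `A_j = ζ^j`. A point `z` lies on
the chord through two distinct points `a`, `b` of the unit circle as soon as `z + ab z̄ = a + b`.
The point `p = ζ(ζ⁸ + 1)/(ζ + 1) = φ₈(A₁)` satisfies the chord equations of `A₀A₈` and `A₁A₉`
identically in `ζ`, and the chord equation of `A₅A₂₂` because of the cyclotomic relation
`Φ₃₀(ζ) = ζ⁸ + ζ⁷ - ζ⁵ - ζ⁴ - ζ³ + ζ + 1 = 0`.
-/

open Real ComplexConjugate

theorem Complex.exists_eq_add_real_smul_of_add_mul_conj_eq {a b z : ℂ} (ha : ‖a‖ = 1)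
    (hb : ‖b‖ = 1) (hab : a ≠ b) (hz : z + a * b * conj z = a + b) :
    ∃ t : ℝ, z = a + t • (b - a) := by
  have ha0 : a ≠ 0 := norm_ne_zero_iff.mp (by simp [ha])
  have hb0 : b ≠ 0 := norm_ne_zero_iff.mp (by simp [hb])
  have hba : b - a ≠ 0 := sub_ne_zero.mpr hab.symm
  have hconj_z : conj z = (a + b - z) / (a * b) := by
    field_simp
    linear_combination hz
  have hreal : conj ((z - a) / (b - a)) = (z - a) / (b - a) := by
    rw [map_div₀, map_sub, map_sub, ← Complex.inv_eq_conj ha, ← Complex.inv_eq_conj hb,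
      hconj_z]
    field_simp
    ring
  refine ⟨((z - a) / (b - a)).re, ?_⟩
  rw [Complex.real_smul, Complex.conj_eq_iff_re.mp hreal, div_mul_cancel₀ _ hba]
  ring

section PrimitiveRoot

variable {R : Type*} [CommRing R] {ζ : R}

theorem IsPrimitiveRoot.add_one_ne_zero {n : ℕ} (hζ : IsPrimitiveRoot ζ n) (hn : 2 < n) :
    ζ + 1 ≠ 0 := fun h =>
  hζ.pow_ne_one_of_pos_of_lt (l := 2) (by norm_num) hn (by linear_combination (ζ - 1) * h)

theorem IsPrimitiveRoot.cyclotomic_thirty_relation [IsDomain R] (hζ : IsPrimitiveRoot ζ 30) :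
    ζ ^ 8 + ζ ^ 7 - ζ ^ 5 - ζ ^ 4 - ζ ^ 3 + ζ + 1 = 0 := by
  have h15 : ζ ^ 15 = -1 :=
    (hζ.pow_of_dvd (by norm_num) (by norm_num : 15 ∣ 30)).eq_neg_one_of_two_right
  have h5 : ζ ^ 5 + 1 ≠ 0 := fun h =>
    hζ.pow_ne_one_of_pos_of_lt (l := 10) (by norm_num) (by norm_num)
      (by linear_combination (ζ ^ 5 - 1) * h)
  have h3 : ζ ^ 3 + 1 ≠ 0 := fun h =>
    hζ.pow_ne_one_of_pos_of_lt (l := 6) (by norm_num) (by norm_num)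
      (by linear_combination (ζ ^ 3 - 1) * h)
  -- `x¹⁵ + 1 = (x + 1)Φ₆Φ₁₀Φ₃₀`, while `x³ + 1 = (x + 1)Φ₆` and `x⁵ + 1 = (x + 1)Φ₁₀`
  have hprod : (ζ ^ 5 + 1) * (ζ ^ 3 + 1) * (ζ ^ 8 + ζ ^ 7 - ζ ^ 5 - ζ ^ 4 - ζ ^ 3 + ζ + 1) = 0 := by
    linear_combination (ζ + 1) * h15
  simpa [h5, h3] using hprod

end PrimitiveRoot

-- `φ_k(A₁)` in terms of `ζ = A₁ = e^{iβ}`, since `cos(kβ/2)/cos(β/2) = ζ^{(1-k)/2}(ζ^k + 1)/(ζ + 1)`.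
noncomputable def consecutiveDiagonalMeet (ζ : ℂ) (k : ℕ) : ℂ := (ζ ^ (k + 1) + ζ) / (ζ + 1)

section ConsecutiveDiagonals

variable {ζ : ℂ} {k : ℕ}

theorem conj_consecutiveDiagonalMeet (hζ : ‖ζ‖ = 1) (hζ1 : ζ + 1 ≠ 0) :
    conj (consecutiveDiagonalMeet ζ k) = (ζ ^ k + 1) / (ζ ^ k * (ζ + 1)) := by
  have hζ0 : ζ ≠ 0 := norm_ne_zero_iff.mp (by simp [hζ])
  rw [consecutiveDiagonalMeet, map_div₀, map_add, map_add, map_pow, map_one,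
    ← Complex.inv_eq_conj hζ, inv_pow, div_eq_div_iff]
  · field_simp
    ring
  · rw [show ζ⁻¹ + 1 = (ζ + 1) / ζ by field_simp; ring]
    exact div_ne_zero hζ1 hζ0
  · exact mul_ne_zero (pow_ne_zero _ hζ0) hζ1

theorem exists_consecutiveDiagonalMeet_eq_left (hζ : ‖ζ‖ = 1) (hζ1 : ζ + 1 ≠ 0)
    (hk : ζ ^ k ≠ 1) : ∃ t : ℝ, consecutiveDiagonalMeet ζ k = 1 + t • (ζ ^ k - 1) := by
  have hζ0 : ζ ≠ 0 := norm_ne_zero_iff.mp (by simp [hζ])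
  refine Complex.exists_eq_add_real_smul_of_add_mul_conj_eq norm_one (by simp [hζ])
    (Ne.symm hk) ?_
  rw [conj_consecutiveDiagonalMeet hζ hζ1, consecutiveDiagonalMeet]
  field_simp
  ring

theorem exists_consecutiveDiagonalMeet_eq_right (hζ : ‖ζ‖ = 1) (hζ1 : ζ + 1 ≠ 0)
    (hk : ζ ^ k ≠ 1) :
    ∃ t : ℝ, consecutiveDiagonalMeet ζ k = ζ + t • (ζ ^ (k + 1) - ζ) := by
  have hζ0 : ζ ≠ 0 := norm_ne_zero_iff.mp (by simp [hζ])
  have hne : ζ ≠ ζ ^ (k + 1) := fun h =>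
    hk (mul_left_cancel₀ hζ0 (by rw [← pow_succ']; simpa using h.symm))
  refine Complex.exists_eq_add_real_smul_of_add_mul_conj_eq hζ (by simp [hζ]) hne ?_
  rw [conj_consecutiveDiagonalMeet hζ hζ1, consecutiveDiagonalMeet]
  field_simp
  ring

theorem IsPrimitiveRoot.exists_consecutiveDiagonalMeet_eight_eq (hζ : IsPrimitiveRoot ζ 30) :
    ∃ t : ℝ, consecutiveDiagonalMeet ζ 8 = ζ ^ 5 + t • (ζ ^ 22 - ζ ^ 5) := by
  have hnorm : ‖ζ‖ = 1 := hζ.norm'_eq_one (by norm_num)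
  have hζ1 : ζ + 1 ≠ 0 := hζ.add_one_ne_zero (by norm_num)
  have h15 : ζ ^ 15 = -1 :=
    (hζ.pow_of_dvd (by norm_num) (by norm_num : 15 ∣ 30)).eq_neg_one_of_two_right
  have hne : ζ ^ 5 ≠ ζ ^ 22 := fun h => by
    have := hζ.pow_inj (by norm_num) (by norm_num) h
    norm_num at this
  refine Complex.exists_eq_add_real_smul_of_add_mul_conj_eq (by simp [hnorm]) (by simp [hnorm])
    hne ?_
  rw [conj_consecutiveDiagonalMeet hnorm hζ1, consecutiveDiagonalMeet]
  field_simp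
  -- modulo `ζ¹⁵ = -1` the cleared chord equation reads `Φ₃₀(ζ)(ζ - ζ² + ζ³ - ζ⁴) = 0`
  linear_combination (ζ - ζ ^ 2 + ζ ^ 3 - ζ ^ 4) * hζ.cyclotomic_thirty_relation
    + (ζ ^ 4 - ζ ^ 7 - ζ ^ 8 + ζ ^ 12) * h15

end ConsecutiveDiagonals

/-- in the regular 30-gon the three diagonals
`A 0 A 8`, `A 1 A 9` and `A 5 A 22` are concurrent:
some point of ℂ lies on all three lines.  (Sporadic extra incidence behind K(30;8,12), K(30;8,13), K(30;12,13).) -/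
theorem stmt_11 (β : ℝ) (hβ : β = 2 * π / 30)
    (A : ℤ → ℂ) (hA : ∀ j : ℤ, A j = Complex.exp ((β * j : ℝ) * Complex.I)) :
    ∃ p : ℂ,
      (∃ t : ℝ, p = A 0 + t • (A 8 - A 0)) ∧
      (∃ t : ℝ, p = A 1 + t • (A 9 - A 1)) ∧
      (∃ t : ℝ, p = A 5 + t • (A 22 - A 5)) := by
  set ζ := Complex.exp (2 * π * Complex.I / (30 : ℕ))
  have hζ : IsPrimitiveRoot ζ 30 := Complex.isPrimitiveRoot_exp 30 (by norm_num)
  have hA_pow (n : ℕ) : A n = ζ ^ n := by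
    rw [hA, ← Complex.exp_nat_mul, hβ]
    push_cast
    ring_nf
  have hnorm : ‖ζ‖ = 1 := hζ.norm'_eq_one (by norm_num)
  have hζ1 : ζ + 1 ≠ 0 := hζ.add_one_ne_zero (by norm_num)
  have hζ8 : ζ ^ 8 ≠ 1 := hζ.pow_ne_one_of_pos_of_lt (by norm_num) (by norm_num)
  rw [show A 0 = ζ ^ 0 from hA_pow 0, show A 1 = ζ ^ 1 from hA_pow 1,
    show A 5 = ζ ^ 5 from hA_pow 5, show A 8 = ζ ^ 8 from hA_pow 8,
    show A 9 = ζ ^ 9 from hA_pow 9, show A 22 = ζ ^ 22 from hA_pow 22]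
  refine ⟨consecutiveDiagonalMeet ζ 8, ?_, ?_, hζ.exists_consecutiveDiagonalMeet_eight_eq⟩
  · simpa using exists_consecutiveDiagonalMeet_eq_left hnorm hζ1 hζ8
  · simpa using exists_consecutiveDiagonalMeet_eq_right hnorm hζ1 hζ8
end

section
/- Let n = 42, β = 2π/42, and A_j = exp(iβj) ∈ ℂ (indices modulo 42) the vertices of the regular 42-gon inscribed in the unit circle. Then the three diagonals A_0A_6, A_1A_7, and A_4A_33 are concurrent: there exists a point of ℂ lying on all three lines. Equivalently, the intersection point φ_6(A_1) = (cos(6β/2)/cos(β/2))·exp(i·5β/2)·exp(iβ) of the consecutive 6-th diagonals A_0A_6 and A_1A_7 lies on the line through A_4 and A_33. (This sporadic extra incidence is why K(42;6,12), K(42;6,13), K(42;12,13) fail to be (126_4) configurations.) -/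
open Real

lemma onLine (u v p : ℂ) (hvu : v - u ≠ 0)
    (h : (p - u).im * (v - u).re - (p - u).re * (v - u).im = 0) :
    ∃ t : ℝ, p = u + t • (v - u) := by
  refine ⟨((p - u) / (v - u)).re, ?_⟩
  have him : ((p - u) / (v - u)).im = 0 := by
    rw [Complex.div_im, div_sub_div_same, h, zero_div]
  have he : (((p - u) / (v - u)).re : ℂ) = (p - u) / (v - u) := by
    apply Complex.ext <;> simp [him]
  rw [Complex.real_smul, he, div_mul_cancel₀ _ hvu]
  ring

lemma sin7exp (x : ℝ) : Real.sin (7*x) =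
    7*(Real.cos x)^6*Real.sin x - 35*(Real.cos x)^4*(Real.sin x)^3
      + 21*(Real.cos x)^2*(Real.sin x)^5 - (Real.sin x)^7 := by
  have h := Real.sin_sq_add_cos_sq x
  rw [show (7:ℝ)*x = x+(x+(x+(x+(x+(x+x))))) by ring]
  simp only [Real.sin_add, Real.cos_add]
  ring

lemma cos7exp (x : ℝ) : Real.cos (7*x) =
    (Real.cos x)^7 - 21*(Real.cos x)^5*(Real.sin x)^2
      + 35*(Real.cos x)^3*(Real.sin x)^4 - 7*(Real.cos x)*(Real.sin x)^6 := by
  rw [show (7:ℝ)*x = x+(x+(x+(x+(x+(x+x))))) by ring]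
  simp only [Real.sin_add, Real.cos_add]
  ring

lemma cos4exp (x : ℝ) : Real.cos (4*x) = 1 - 8*(Real.sin x)^2 + 8*(Real.sin x)^4 := by
  have h := Real.sin_sq_add_cos_sq x
  rw [show (4:ℝ)*x = x+x+(x+x) by ring]
  simp only [Real.sin_add, Real.cos_add]
  linear_combination ((Real.cos x)^2 + 1 - 7*(Real.sin x)^2) * h

-- the sporadic cubic for t = sin(π/14)
lemma cubic14 : 8*(Real.sin (π/14))^3 - 4*(Real.sin (π/14))^2 - 4*(Real.sin (π/14)) + 1 = 0 := by
  set t := Real.sin (π/14) with ht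
  have h1 : Real.sin (3*(π/14)) = Real.cos (4*(π/14)) := by
    rw [← Real.sin_pi_div_two_sub]
    congr 1
    ring
  rw [Real.sin_three_mul, cos4exp] at h1
  have htpos : 0 < t := by
    rw [ht]
    apply Real.sin_pos_of_pos_of_lt_pi <;> nlinarith [Real.pi_pos]
  have hq : (t+1) * (8*t^3 - 4*t^2 - 4*t + 1) = 0 := by linear_combination -h1
  rcases mul_eq_zero.mp hq with h | h
  · linarith
  · exact h

section alg
variable {s c r K : ℝ}

lemma alg1 (hg1 : s^2 + c^2 = 1) (hg2 : r^2 = 3)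
    (hg3 : 7*c^6*s - 35*c^4*s^3 + 21*c^2*s^5 - s^7 = 1/2)
    (hg4 : c^7 - 21*c^5*s^2 + 35*c^3*s^4 - 7*c*s^6 = r/2)
    (hH : 8*(3*s-4*s^3)^3 - 4*(3*s-4*s^3)^2 - 4*(3*s-4*s^3) + 1 = 0)
    (hK : 2*c*K = r*c + s) (hc : c ≠ 0) :
    (K/2 - 0) * ((c^2/2 - s^2/2 + s*c*r) - 1)
    - (K*r/2 - 1) * ((r*(c^2 - s^2)/2 - s*c) - 0) = 0 := by
  have h2 : (2*c) * ((K/2 - 0) * ((c^2/2 - s^2/2 + s*c*r) - 1)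
      - (K*r/2 - 1) * ((r*(c^2 - s^2)/2 - s*c) - 0)) = 0 := by
    linear_combination ((1/2:ℝ)*c*r + (1/2:ℝ)*s) * hg1
      + ((-1/4:ℝ)*c^3*r + (3/4:ℝ)*s*c^2 + (1/4:ℝ)*s^2*c*r + (1/4:ℝ)*s^3) * hg2
      + ((-1/2:ℝ) + (1/4:ℝ)*c^2 + (-1/4:ℝ)*c^2*r^2 + s*c*r + (-1/4:ℝ)*s^2 + (1/4:ℝ)*s^2*r^2) * hK
  rcases mul_eq_zero.mp h2 with h | h
  · exact absurd h (by simpa using hc)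
  · exact h

lemma alg2 (hg1 : s^2 + c^2 = 1) (hg2 : r^2 = 3)
    (hg3 : 7*c^6*s - 35*c^4*s^3 + 21*c^2*s^5 - s^7 = 1/2)
    (hg4 : c^7 - 21*c^5*s^2 + 35*c^3*s^4 - 7*c*s^6 = r/2)
    (hH : 8*(3*s-4*s^3)^3 - 4*(3*s-4*s^3)^2 - 4*(3*s-4*s^3) + 1 = 0)
    (hK : 2*c*K = r*c + s) (hc : c ≠ 0) :
    (K/2 - 2*s*c) * ((1/2) - (c^2 - s^2))
    - (K*r/2 - (c^2 - s^2)) * (r/2 - 2*s*c) = 0 := by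
  have h2 : (2*c) * ((K/2 - 2*s*c) * ((1/2) - (c^2 - s^2))
      - (K*r/2 - (c^2 - s^2)) * (r/2 - 2*s*c)) = 0 := by
    linear_combination ((1/2:ℝ)*c*r + (1/2:ℝ)*s) * hg1
      + ((-1/4:ℝ)*c*r + (-1/4:ℝ)*s + s*c^2) * hg2
      + ((1/4:ℝ) + (-1/4:ℝ)*r^2 + (-1/2:ℝ)*c^2 + s*c*r + (1/2:ℝ)*s^2) * hK
  rcases mul_eq_zero.mp h2 with h | h
  · exact absurd h (by simpa using hc)
  · exact h

lemma alg3 (hg1 : s^2 + c^2 = 1) (hg2 : r^2 = 3)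
    (hg3 : 7*c^6*s - 35*c^4*s^3 + 21*c^2*s^5 - s^7 = 1/2)
    (hg4 : c^7 - 21*c^5*s^2 + 35*c^3*s^4 - 7*c*s^6 = r/2)
    (hH : 8*(3*s-4*s^3)^3 - 4*(3*s-4*s^3)^2 - 4*(3*s-4*s^3) + 1 = 0)
    (hK : 2*c*K = r*c + s) (hc : c ≠ 0) :
    (K/2 - (c + r*s)/2) * ((3*s - 4*s^3) - (r*c - s)/2)
    - (K*r/2 - (r*c - s)/2) * ((3*c - 4*c^3) - (c + r*s)/2) = 0 := by
  have h2 : (2*c) * ((K/2 - (c + r*s)/2) * ((3*s - 4*s^3) - (r*c - s)/2)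
      - (K*r/2 - (r*c - s)/2) * ((3*c - 4*c^3) - (c + r*s)/2)) = 0 := by
    linear_combination
      ((-1/2:ℝ) + (-1:ℝ)*c*r + (4:ℝ)*c^2 + (-4:ℝ)*c^3*r + (-2:ℝ)*c^4 + (-2:ℝ)*c^6
        + (4:ℝ)*s + (2:ℝ)*s*c*r + (10:ℝ)*s*c^2 + (6:ℝ)*s*c^4 + (6:ℝ)*s*c^6
        + (18:ℝ)*s^2 + (4:ℝ)*s^2*c*r + (22:ℝ)*s^2*c^2 + (20:ℝ)*s^2*c^4 + (4:ℝ)*s^2*c^6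
        + (-110:ℝ)*s^3 + (-104:ℝ)*s^3*c^2 + (-98:ℝ)*s^3*c^4 + (-8:ℝ)*s^3*c^6
        + (-32:ℝ)*s^4 + (-10:ℝ)*s^4*c^2 + (-60:ℝ)*s^4*c^4
        + (322:ℝ)*s^5 + (218:ℝ)*s^5*c^2 + (120:ℝ)*s^5*c^4 + (60:ℝ)*s^6*c^2
        + (-254:ℝ)*s^7 + (-120:ℝ)*s^7*c^2 + (-4:ℝ)*s^8 + (8:ℝ)*s^9) * hg1
      + ((-3/2:ℝ)*c^2 + (2:ℝ)*c^4 + (1/4:ℝ)*s*c*r + (1/4:ℝ)*s^2) * hg2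
      + ((4:ℝ)*s + (-6:ℝ)*s^2 + (-4:ℝ)*s^3 + (8:ℝ)*s^4) * hg3
      + ((2:ℝ)*c + (-6:ℝ)*s*c + (-4:ℝ)*s^2*c + (16/2:ℝ)*s^3*c) * hg4
      + ((-1/2:ℝ)) * hH
      + ((-3/2:ℝ)*c*r + (2:ℝ)*c^3*r + (7/4:ℝ)*s + (1/4:ℝ)*s*r^2 + (-2:ℝ)*s^3) * hK
  rcases mul_eq_zero.mp h2 with h | h
  · exact absurd h (by simpa using hc)
  · exact h

end alg

set_option maxHeartbeats 1000000 in
/-- in the regular 42-gon the three diagonals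
`A 0 A 6`, `A 1 A 7` and `A 4 A 33` are concurrent:
some point of ℂ lies on all three lines.  (Sporadic extra incidence behind K(42;6,12), K(42;6,13), K(42;12,13).) -/
theorem stmt_12 (β : ℝ) (hβ : β = 2 * π / 42)
    (A : ℤ → ℂ) (hA : ∀ j : ℤ, A j = Complex.exp ((β * j : ℝ) * Complex.I)) :
    ∃ p : ℂ,
      (∃ t : ℝ, p = A 0 + t • (A 6 - A 0)) ∧
      (∃ t : ℝ, p = A 1 + t • (A 7 - A 1)) ∧
      (∃ t : ℝ, p = A 4 + t • (A 33 - A 4)) := by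
  have hpi := Real.pi_pos
  -- the three diagonals are nondegenerate
  have hne1 : A 6 - A 0 ≠ 0 := by
    intro h0
    have h1 : (A 6 - A 0).im = 0 := by rw [h0]; rfl
    rw [Complex.sub_im, hA 6, hA 0] at h1
    simp only [Complex.exp_ofReal_mul_I_im] at h1
    push_cast at h1
    rw [show Real.sin (β*0) = 0 by simp] at h1
    have h2 : Real.sin (β*6) > 0 := by
      rw [show β*6 = 2*π/7 by rw [hβ]; ring]
      exact Real.sin_pos_of_pos_of_lt_pi (by positivity) (by linarith)
    linarith
  have hne2 : A 7 - A 1 ≠ 0 := by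
    intro h0
    have h1 : (A 7 - A 1).im = 0 := by rw [h0]; rfl
    rw [Complex.sub_im, hA 7, hA 1] at h1
    simp only [Complex.exp_ofReal_mul_I_im] at h1
    push_cast at h1
    have h2 : Real.sin (β*1) < Real.sin (β*7) := by
      rw [show β*1 = π/21 by rw [hβ]; ring, show β*7 = π/3 by rw [hβ]; ring]
      have hmem1 : π/21 ∈ Set.Icc (-(π/2)) (π/2) := by
        constructor <;> [linarith; linarith]
      have hmem2 : π/3 ∈ Set.Icc (-(π/2)) (π/2) := by
        constructor <;> [linarith; linarith]
      exact Real.strictMonoOn_sin hmem1 hmem2 (by linarith)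
    linarith
  have hne3 : A 33 - A 4 ≠ 0 := by
    intro h0
    have h1 : (A 33 - A 4).im = 0 := by rw [h0]; rfl
    rw [Complex.sub_im, hA 33, hA 4] at h1
    simp only [Complex.exp_ofReal_mul_I_im] at h1
    push_cast at h1
    have h2 : Real.sin (β*33) < 0 := by
      rw [show β*33 = 2*π - 3*π/7 by rw [hβ]; ring, Real.sin_two_pi_sub]
      have : 0 < Real.sin (3*π/7) :=
        Real.sin_pos_of_pos_of_lt_pi (by positivity) (by linarith)
      linarith
    have h3 : Real.sin (β*4) > 0 := by
      rw [show β*4 = 4*π/21 by rw [hβ]; ring]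
      exact Real.sin_pos_of_pos_of_lt_pi (by positivity) (by linarith)
    linarith
  -- algebraic data
  set s : ℝ := Real.sin (π/42) with hs
  set c : ℝ := Real.cos (π/42) with hc0
  set r : ℝ := Real.sqrt 3 with hr
  set K : ℝ := (r*c + s)/(2*c) with hKdef
  have hcpos : 0 < c := by
    rw [hc0]; apply Real.cos_pos_of_mem_Ioo; constructor <;> [linarith; linarith]
  have hc : c ≠ 0 := ne_of_gt hcpos
  have hg1 : s^2 + c^2 = 1 := Real.sin_sq_add_cos_sq _
  have hg2 : r^2 = 3 := Real.sq_sqrt (by norm_num)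
  have hg3 : 7*c^6*s - 35*c^4*s^3 + 21*c^2*s^5 - s^7 = 1/2 := by
    have e : Real.sin (7*(π/42)) = 1/2 := by
      rw [show 7*(π/42) = π/6 by ring]; exact Real.sin_pi_div_six
    linear_combination e - sin7exp (π/42)
  have hg4 : c^7 - 21*c^5*s^2 + 35*c^3*s^4 - 7*c*s^6 = r/2 := by
    have e : Real.cos (7*(π/42)) = r/2 := by
      rw [show 7*(π/42) = π/6 by ring]; exact Real.cos_pi_div_six
    linear_combination e - cos7exp (π/42)
  have hH : 8*(3*s-4*s^3)^3 - 4*(3*s-4*s^3)^2 - 4*(3*s-4*s^3) + 1 = 0 := by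
    have e : Real.sin (3*(π/42)) = Real.sin (π/14) := by congr 1; ring
    have h3 := Real.sin_three_mul (π/42)
    rw [e] at h3
    rw [← h3]
    exact cubic14
  have hK : 2*c*K = r*c + s := by rw [hKdef]; field_simp
  -- value lemmas for the angles
  have hv1c : Real.cos (β*1) = c^2 - s^2 := by
    rw [show β*1 = π/42 + π/42 by rw [hβ]; ring, Real.cos_add]; ring
  have hv1s : Real.sin (β*1) = 2*s*c := by
    rw [show β*1 = π/42 + π/42 by rw [hβ]; ring, Real.sin_add]; ring
  have hv6c : Real.cos (β*6) = c^2/2 - s^2/2 + s*c*r := by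
    rw [show β*6 = π/3 - (π/42 + π/42) by rw [hβ]; ring, Real.cos_sub,
      Real.cos_add, Real.sin_add, Real.cos_pi_div_three, Real.sin_pi_div_three]
    rw [hs, hc0, hr]; ring
  have hv6s : Real.sin (β*6) = r*(c^2 - s^2)/2 - s*c := by
    rw [show β*6 = π/3 - (π/42 + π/42) by rw [hβ]; ring, Real.sin_sub,
      Real.cos_add, Real.sin_add, Real.cos_pi_div_three, Real.sin_pi_div_three]
    rw [hs, hc0, hr]; ring
  have hv7c : Real.cos (β*7) = 1/2 := by
    rw [show β*7 = π/3 by rw [hβ]; ring]; exact Real.cos_pi_div_three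
  have hv7s : Real.sin (β*7) = r/2 := by
    rw [show β*7 = π/3 by rw [hβ]; ring, Real.sin_pi_div_three, hr]
  have hv4c : Real.cos (β*4) = (r*c - s)/2 := by
    rw [show β*4 = π/6 + π/42 by rw [hβ]; ring, Real.cos_add,
      Real.cos_pi_div_six, Real.sin_pi_div_six]
    rw [hs, hc0, hr]; ring
  have hv4s : Real.sin (β*4) = (c + r*s)/2 := by
    rw [show β*4 = π/6 + π/42 by rw [hβ]; ring, Real.sin_add,
      Real.cos_pi_div_six, Real.sin_pi_div_six]
    rw [hs, hc0, hr]; ring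
  have hv33c : Real.cos (β*33) = 3*s - 4*s^3 := by
    rw [show β*33 = π + (π/2 + 3*(π/42)) by rw [hβ]; ring]
    simp only [Real.cos_add, Real.sin_add, Real.cos_pi, Real.sin_pi,
      Real.cos_pi_div_two, Real.sin_pi_div_two, Real.sin_three_mul, Real.cos_three_mul]
    rw [hs]; ring
  have hv33s : Real.sin (β*33) = 3*c - 4*c^3 := by
    rw [show β*33 = π + (π/2 + 3*(π/42)) by rw [hβ]; ring]
    simp only [Real.cos_add, Real.sin_add, Real.cos_pi, Real.sin_pi,
      Real.cos_pi_div_two, Real.sin_pi_div_two, Real.sin_three_mul, Real.cos_three_mul]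
    rw [hc0]; ring
  -- the point
  refine ⟨Complex.ofReal (K*r/2) + Complex.ofReal (K/2) * Complex.I, ?_, ?_, ?_⟩
  · apply onLine _ _ _ hne1
    rw [hA 6, hA 0]
    simp only [Complex.sub_im, Complex.sub_re, Complex.add_re, Complex.add_im,
      Complex.mul_re, Complex.mul_im, Complex.ofReal_re, Complex.ofReal_im,
      Complex.I_re, Complex.I_im, Complex.exp_ofReal_mul_I_re, Complex.exp_ofReal_mul_I_im]
    push_cast
    rw [show Real.sin (β*0) = 0 by simp, show Real.cos (β*0) = 1 by simp, hv6c, hv6s]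
    linear_combination alg1 hg1 hg2 hg3 hg4 hH hK hc
  · apply onLine _ _ _ hne2
    rw [hA 7, hA 1]
    simp only [Complex.sub_im, Complex.sub_re, Complex.add_re, Complex.add_im,
      Complex.mul_re, Complex.mul_im, Complex.ofReal_re, Complex.ofReal_im,
      Complex.I_re, Complex.I_im, Complex.exp_ofReal_mul_I_re, Complex.exp_ofReal_mul_I_im]
    push_cast
    rw [hv7c, hv7s, hv1c, hv1s]
    linear_combination alg2 hg1 hg2 hg3 hg4 hH hK hc
  · apply onLine _ _ _ hne3
    rw [hA 33, hA 4]
    simp only [Complex.sub_im, Complex.sub_re, Complex.add_re, Complex.add_im,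
      Complex.mul_re, Complex.mul_im, Complex.ofReal_re, Complex.ofReal_im,
      Complex.I_re, Complex.I_im, Complex.exp_ofReal_mul_I_re, Complex.exp_ofReal_mul_I_im]
    push_cast
    rw [hv33c, hv33s, hv4c, hv4s]
    linear_combination alg3 hg1 hg2 hg3 hg4 hH hK hc
end

section
/- Let n = 12, β = 2π/12 = π/6, A_j = exp(iβj) ∈ ℂ (indices modulo 12) the vertices of the regular 12-gon inscribed in the unit circle, and φ_4(z) = (cos(2β)/cos(β/2))·exp(i·3β/2)·z, so that B_j := φ_4(A_{j+1}) is the vertex A_jA_{j+4} ∩ A_{j+1}A_{j+5} of the 4-th inner 12-gon 𝒜_4. Then the four points A_0, A_5, B_2 = φ_4(A_3), and B_10 = φ_4(A_11) are collinear over ℝ; that is, the 5-th diagonal A_0A_5 of the regular 12-gon passes through two vertices of 𝒜_4. (This is the extra incidence showing that the smallest combinatorial Kárteszi configuration K(12;4,5) has a geometric representation with extra incidences and hence is not a (36_4) configuration.) -/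
open Real

lemma cos_pi12 : Real.cos (π / 12) = (Real.sqrt 6 + Real.sqrt 2) / 4 := by
  have h : (π / 12 : ℝ) = π / 3 - π / 4 := by ring
  rw [h, Real.cos_sub, Real.cos_pi_div_three, Real.sin_pi_div_three,
    Real.cos_pi_div_four, Real.sin_pi_div_four]
  rw [show (6:ℝ) = 2 * 3 by norm_num, Real.sqrt_mul (by norm_num)]
  ring

lemma sin_pi12 : Real.sin (π / 12) = (Real.sqrt 6 - Real.sqrt 2) / 4 := by
  have h : (π / 12 : ℝ) = π / 3 - π / 4 := by ring
  rw [h, Real.sin_sub, Real.cos_pi_div_three, Real.sin_pi_div_three,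
    Real.cos_pi_div_four, Real.sin_pi_div_four]
  rw [show (6:ℝ) = 2 * 3 by norm_num, Real.sqrt_mul (by norm_num)]
  ring

/-- in the regular 12-gon, with `φ_4(z) = (cos(2β)/cos(β/2))·exp(i·3β/2)·z`
(`β = 2π/12`), the four points `A 0, A 5, φ_4(A 3), φ_4(A 11)` are collinear over ℝ:
the 5-th diagonal `A 0 A 5` passes through two vertices of the 4-th inner 12-gon.
(This is the extra incidence of K(12;4,5).) -/
theorem stmt_13 (β : ℝ) (hβ : β = 2 * π / 12)
    (A : ℤ → ℂ) (hA : ∀ j : ℤ, A j = Complex.exp ((β * j : ℝ) * Complex.I))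
    (φ : ℂ → ℂ)
    (hφ : ∀ z : ℂ, φ z = (Real.cos (2 * β) / Real.cos (β / 2) : ℝ) *
      Complex.exp ((3 * β / 2 : ℝ) * Complex.I) * z) :
    Collinear ℝ ({A 0, A 5, φ (A 3), φ (A 11)} : Set ℂ) := by
  subst hβ
  have hset : ({A 0, A 5, φ (A 3), φ (A 11)} : Set ℂ)
      = ({φ (A 3), φ (A 11), A 0, A 5} : Set ℂ) := by
    ext z; simp only [Set.mem_insert_iff, Set.mem_singleton_iff]; tauto
  rw [hset]
  -- basic values
  have s2 : Real.sqrt 2 ^ 2 = 2 := Real.sq_sqrt (by norm_num)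
  have s3 : Real.sqrt 3 ^ 2 = 3 := Real.sq_sqrt (by norm_num)
  have s6 : Real.sqrt 6 = Real.sqrt 2 * Real.sqrt 3 := by
    rw [show (6:ℝ) = 2 * 3 by norm_num, Real.sqrt_mul (by norm_num)]
  have s2p : (0:ℝ) < Real.sqrt 2 := Real.sqrt_pos.2 (by norm_num)
  have s3p : (0:ℝ) < Real.sqrt 3 := Real.sqrt_pos.2 (by norm_num)
  have hsum : (0:ℝ) < Real.sqrt 6 + Real.sqrt 2 := by rw [s6]; positivity
  have hc : Real.cos (2 * (2 * π / 12)) / Real.cos (2 * π / 12 / 2)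
      = 2 / (Real.sqrt 6 + Real.sqrt 2) := by
    rw [show (2 * (2 * π / 12) : ℝ) = π / 3 by ring,
      show (2 * π / 12 / 2 : ℝ) = π / 12 by ring,
      Real.cos_pi_div_three, cos_pi12]
    field_simp
    ring
  have hA0 : A 0 = 1 := by rw [hA]; norm_num
  have hA5 : A 5 = Complex.exp ((5 * π / 6 : ℝ) * Complex.I) := by
    rw [hA]; norm_num; ring_nf
  have hφA : ∀ (j : ℤ) (θ : ℝ), 3 * (2 * π / 12) / 2 + 2 * π / 12 * j = θ →
      φ (A j) = ((2 / (Real.sqrt 6 + Real.sqrt 2) : ℝ) : ℂ) *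
        Complex.exp ((θ : ℝ) * Complex.I) := by
    intro j θ hθ
    rw [hφ, hA, hc, mul_assoc, ← Complex.exp_add, ← hθ]
    push_cast
    ring_nf
  have key : ∀ (j : ℤ) (θ t : ℝ), 3 * (2 * π / 12) / 2 + 2 * π / 12 * j = θ →
      ((2 / (Real.sqrt 6 + Real.sqrt 2) : ℝ) : ℂ) * Complex.exp ((θ : ℝ) * Complex.I)
        = AffineMap.lineMap (A 0) (A 5) t →
      φ (A j) ∈ line[ℝ, A 0, A 5] := by
    intro j θ t hθ h
    rw [hφA j θ hθ, h]
    exact AffineMap.lineMap_mem_affineSpan_pair _ _ _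
  refine collinear_insert_insert_of_mem_affineSpan_pair
    (key 3 (π - π/4) (Real.sqrt 3 - 1) (by push_cast; ring) ?_)
    (key 11 (π/12 + 2*π) (2 - Real.sqrt 3) (by push_cast; ring) ?_) <;>
  · rw [hA0, hA5, AffineMap.lineMap_apply_module]
    apply Complex.ext <;>
    · simp only [Complex.add_re, Complex.add_im, Complex.smul_re, Complex.smul_im,
        Complex.sub_re, Complex.sub_im, Complex.one_re, Complex.one_im,
        Complex.mul_re, Complex.mul_im, Complex.ofReal_re, Complex.ofReal_im,
        Complex.exp_ofReal_mul_I_re, Complex.exp_ofReal_mul_I_im, smul_eq_mul]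
      rw [show (5 * π / 6 : ℝ) = π - π / 6 by ring]
      simp only [Real.cos_pi_sub, Real.sin_pi_sub, Real.cos_add_two_pi, Real.sin_add_two_pi,
        Real.cos_pi_div_four, Real.sin_pi_div_four, Real.cos_pi_div_six, Real.sin_pi_div_six,
        cos_pi12, sin_pi12]
      rw [s6]
      field_simp
      ring_nf
      nlinarith [s2, s3, mul_pos s2p s3p, sq_nonneg (Real.sqrt 2 * Real.sqrt 3)]
end
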